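/- Let T ∈ (0, ∞] and δ > 0, and let y : [0, T) → ℝ be differentiable with y(0) ≤ -(1+δ) and y'(t) ≤ 1 - y(t)² for all t ∈ [0, T). Then for every t ∈ [0, T), t < arctanh(1/(1+δ)) and y(t) ≤ -coth(arctanh(1/(1+δ)) - t); in particular T ≤ arctanh(1/(1+δ)). -/

import Mathlib

/-!
On `y < -1` the function `arcoth y = ½ log ((y + 1) / (y - 1))` is decreasing with derivative
`1 / (1 - y²) < 0`, so `y' ≤ 1 - y²` says exactly that `t ↦ arcoth (y t)` grows with slope at
least `1`. A solution starting at or below `-(1 + δ)` stays there, since the right-hand side is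
negative on that level; hence `arcoth (y t) ≥ arcoth (-(1 + δ)) + t = t - arctanh (1 / (1 + δ))`
(note `arcoth (-c) = -arctanh c⁻¹`). As `arcoth < 0` on `(-∞, -1)`, this forces
`t < arctanh (1 / (1 + δ))`, and inverting `arcoth` by `arcoth (-coth s) = -s` bounds `y t`.
-/

/-- Hyperbolic cotangent. -/
noncomputable def coth (t : ℝ) : ℝ := Real.cosh t / Real.sinh t

/-- Inverse hyperbolic tangent. -/
noncomputable def arctanh (y : ℝ) : ℝ := Real.log ((1 + y) / (1 - y)) / 2

open Real Set Filter Topology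

noncomputable def arcoth (x : ℝ) : ℝ := log ((x + 1) / (x - 1)) / 2

theorem hasDerivAt_arcoth {x : ℝ} (hx₁ : x + 1 ≠ 0) (hx₂ : x - 1 ≠ 0) :
    HasDerivAt arcoth (1 / (1 - x ^ 2)) x := by
  have hq : HasDerivAt (fun x => (x + 1) / (x - 1))
      ((1 * (x - 1) - (x + 1) * 1) / (x - 1) ^ 2) x :=
    ((hasDerivAt_id x).add_const 1).div ((hasDerivAt_id x).sub_const 1) hx₂
  refine ((hq.log (div_ne_zero hx₁ hx₂)).div_const 2).congr_deriv ?_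
  rw [show 1 - x ^ 2 = -((x + 1) * (x - 1)) by ring]
  field_simp
  ring

theorem strictAntiOn_arcoth : StrictAntiOn arcoth (Iio (-1)) := by
  have hder : ∀ x ∈ Iio (-1 : ℝ), HasDerivAt arcoth (1 / (1 - x ^ 2)) x := fun x hx =>
    hasDerivAt_arcoth (by linarith [mem_Iio.1 hx]) (by linarith [mem_Iio.1 hx])
  refine strictAntiOn_of_hasDerivWithinAt_neg (f' := fun x => 1 / (1 - x ^ 2)) (convex_Iio _)
    (fun x hx => (hder x hx).continuousAt.continuousWithinAt) (fun x hx => ?_) (fun x hx => ?_)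
  · rw [interior_Iio] at hx ⊢
    exact (hder x hx).hasDerivWithinAt
  · rw [interior_Iio, mem_Iio] at hx
    exact one_div_neg.2 (by nlinarith)

theorem arcoth_neg {x : ℝ} (hx : x < -1) : arcoth x < 0 := by
  refine div_neg_of_neg_of_pos (log_neg (div_pos_of_neg_of_neg (by linarith) (by linarith)) ?_)
    two_pos
  rw [div_lt_one_of_neg (by linarith)]
  linarith

theorem arcoth_neg_eq_neg_arctanh_inv {c : ℝ} (hc : c ≠ 0) : arcoth (-c) = -arctanh c⁻¹ := by
  have : (1 + c⁻¹) / (1 - c⁻¹) = (c + 1) / (c - 1) := by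
    rw [← mul_div_mul_left _ _ hc, mul_add, mul_sub, mul_inv_cancel₀ hc, mul_one]
  rw [arcoth, arctanh, this, ← neg_div, ← log_inv, inv_div, show -c + 1 = -(c - 1) by ring,
    show -c - 1 = -(c + 1) by ring, neg_div_neg_eq]

theorem arcoth_neg_coth {s : ℝ} (hs : s ≠ 0) : arcoth (-coth s) = -s := by
  have hsinh : sinh s ≠ 0 := sinh_ne_zero.2 hs
  have hnum : -coth s + 1 = -(exp (-s) / sinh s) := by
    rw [coth, ← cosh_sub_sinh]; field_simp; ring
  have hden : -coth s - 1 = -(exp s / sinh s) := by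
    rw [coth, ← cosh_add_sinh]; field_simp; ring
  rw [arcoth, hnum, hden, neg_div_neg_eq, div_div_div_cancel_right₀ hsinh, ← exp_sub, log_exp]
  ring

theorem neg_coth_lt_neg_one {s : ℝ} (hs : 0 < s) : -coth s < -1 := by
  rw [coth, neg_lt_neg_iff, one_lt_div (sinh_pos_iff.2 hs)]
  exact sinh_lt_cosh s

theorem image_le_of_deriv_right_le_one_sub_sq {y y' : ℝ → ℝ} {a b c : ℝ} (hc : c < -1)
    (hy : ContinuousOn y (Icc a b)) (hy' : ∀ x ∈ Ico a b, HasDerivWithinAt y (y' x) (Ici x) x)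
    (hineq : ∀ x ∈ Ico a b, y' x ≤ 1 - y x ^ 2) (ha : y a ≤ c) :
    ∀ x ∈ Icc a b, y x ≤ c :=
  image_le_of_deriv_right_lt_deriv_boundary hy hy' ha (fun _ => hasDerivAt_const _ _)
    fun x hx hyx => by nlinarith [hineq x hx]

theorem arcoth_add_sub_le_of_deriv_right_le_one_sub_sq {y y' : ℝ → ℝ} {a b c : ℝ}
    (hc : c < -1) (hy : ContinuousOn y (Icc a b))
    (hy' : ∀ x ∈ Ico a b, HasDerivWithinAt y (y' x) (Ici x) x)
    (hineq : ∀ x ∈ Ico a b, y' x ≤ 1 - y x ^ 2) (ha : y a ≤ c) :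
    ∀ x ∈ Icc a b, y x ≤ c ∧ arcoth c + (x - a) ≤ arcoth (y x) := by
  have hle := image_le_of_deriv_right_le_one_sub_sq hc hy hy' hineq ha
  have harcoth : ∀ x ∈ Icc a b, HasDerivAt arcoth (1 / (1 - y x ^ 2)) (y x) := fun x hx =>
    hasDerivAt_arcoth (by linarith [hle x hx]) (by linarith [hle x hx])
  have hgrowth := image_le_of_deriv_right_le_deriv_boundary
    (f := fun x => arcoth (y a) + (x - a)) (f' := fun _ => 1) (B := fun x => arcoth (y x))
    (by fun_prop) (fun x _ => (((hasDerivAt_id x).sub_const a).const_add _).hasDerivWithinAt)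
    (by simp) (fun x hx => (harcoth x hx).continuousAt.comp_continuousWithinAt (hy x hx))
    (fun x hx => (harcoth x (Ico_subset_Icc_self hx)).comp_hasDerivWithinAt x (hy' x hx))
    fun x hx => by
      have hneg : 1 - y x ^ 2 < 0 := by nlinarith [hle x (Ico_subset_Icc_self hx)]
      rw [one_div_mul_eq_div, le_div_iff_of_neg hneg, one_mul]
      exact hineq x hx
  have hstart : arcoth c ≤ arcoth (y a) :=
    strictAntiOn_arcoth.antitoneOn (ha.trans_lt hc : y a < -1) (hc : c < -1) ha
  exact fun x hx => ⟨hle x hx, by linarith [hgrowth hx]⟩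

section EReal

variable {T : EReal} {a : ℝ}

theorem Icc_subset_setOf_le_and_coe_lt {b : ℝ} (hb : (b : EReal) < T) :
    Icc a b ⊆ {t : ℝ | a ≤ t ∧ (t : EReal) < T} :=
  fun _ hx => ⟨hx.1, (EReal.coe_le_coe_iff.2 hx.2).trans_lt hb⟩

theorem setOf_le_and_coe_lt_mem_nhdsGE {x : ℝ}
    (hx : x ∈ {t : ℝ | a ≤ t ∧ (t : EReal) < T}) :
    {t : ℝ | a ≤ t ∧ (t : EReal) < T} ∈ 𝓝[≥] x := by
  have hopen : IsOpen {t : ℝ | (t : EReal) < T} :=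
    isOpen_lt continuous_coe_real_ereal continuous_const
  filter_upwards [self_mem_nhdsWithin, mem_nhdsWithin_of_mem_nhds (hopen.mem_nhds hx.2)]
    with t ht hT using ⟨hx.1.trans ht, hT⟩

end EReal

theorem stmt_8_general (T : EReal) (δ : ℝ) (hδ : 0 < δ)
    (y y' : ℝ → ℝ)
    (D : Set ℝ) (hD : D = {t : ℝ | 0 ≤ t ∧ (t : EReal) < T})
    (hy : ∀ t ∈ D, HasDerivWithinAt y (y' t) D t)
    (hy0 : y 0 ≤ -(1 + δ))
    (hineq : ∀ t ∈ D, y' t ≤ 1 - (y t) ^ 2) :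
    (∀ t ∈ D, t < arctanh (1 / (1 + δ)) ∧
        y t ≤ -coth (arctanh (1 / (1 + δ)) - t)) ∧
      T ≤ (arctanh (1 / (1 + δ)) : EReal) := by
  subst hD
  set t₀ := arctanh (1 / (1 + δ))
  have harcoth₀ : arcoth (-(1 + δ)) = -t₀ := by
    rw [arcoth_neg_eq_neg_arctanh_inv (by positivity), ← one_div]
  have hmain :
      ∀ t ∈ {t : ℝ | 0 ≤ t ∧ (t : EReal) < T}, t < t₀ ∧ y t ≤ -coth (t₀ - t) := by
    intro t ht
    have hsub := Icc_subset_setOf_le_and_coe_lt (a := 0) ht.2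
    obtain ⟨hyt, hgrowth⟩ :=
      arcoth_add_sub_le_of_deriv_right_le_one_sub_sq (by linarith) (b := t)
        (fun x hx => (hy x (hsub hx)).continuousWithinAt.mono hsub)
        (fun x hx => (hy x (hsub (Ico_subset_Icc_self hx))).mono_of_mem_nhdsWithin
          (setOf_le_and_coe_lt_mem_nhdsGE (hsub (Ico_subset_Icc_self hx))))
        (fun x hx => hineq x (hsub (Ico_subset_Icc_self hx))) hy0 t (right_mem_Icc.2 ht.1)
    have hyt' : y t < -1 := by linarith
    have hlt : t < t₀ := by linarith [arcoth_neg hyt']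
    refine ⟨hlt,
      (strictAntiOn_arcoth.le_iff_ge (neg_coth_lt_neg_one (sub_pos.2 hlt)) hyt').1 ?_⟩
    rw [arcoth_neg_coth (sub_pos.2 hlt).ne']
    linarith
  refine ⟨hmain, not_lt.1 fun hT => (hmain t₀ ⟨?_, hT⟩).1.false⟩
  linarith [arcoth_neg (show -(1 + δ) < -1 by linarith)]

/-- Riccati comparison estimate (2.18)–(2.21) from the proof of Lemma 2.2:
a solution of `y' ≤ 1 - y²` with `y(0) ≤ -(1+δ)` blows up at or before
`arctanh(1/(1+δ))`. -/
theorem stmt_8 (T : EReal) (hT : 0 < T) (δ : ℝ) (hδ : 0 < δ)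
    (y y' : ℝ → ℝ)
    (D : Set ℝ) (hD : D = {t : ℝ | 0 ≤ t ∧ (t : EReal) < T})
    (hy : ∀ t ∈ D, HasDerivWithinAt y (y' t) D t)
    (hy0 : y 0 ≤ -(1 + δ))
    (hineq : ∀ t ∈ D, y' t ≤ 1 - (y t) ^ 2) :
    (∀ t ∈ D, t < arctanh (1 / (1 + δ)) ∧
        y t ≤ -coth (arctanh (1 / (1 + δ)) - t)) ∧
      T ≤ (arctanh (1 / (1 + δ)) : EReal) :=
  stmt_8_general T δ hδ y y' D hD hy hy0 hineq
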